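/- arXiv:2006.02601 — 5 statements merged into one kernel-verified Lean document; each statement's English description precedes it below -/
import Mathlib

section
/- For all real x, x * tanh(x) ≥ x^2 - x^4/3. -/
/-! Since `tanh' = 1 - tanh ^ 2`, the function `y - tanh y` is nondecreasing, which gives
`|tanh y| ≤ |y|`. Hence `f y = tanh y - (y - y ^ 3 / 3)` has derivative
`y ^ 2 - tanh y ^ 2 ≥ 0`; as `f 0 = 0`, the numbers `x` and `f x` have the same sign,
i.e. `0 ≤ x * f x`. -/

open Real

theorem Monotone.mul_apply_nonneg {α : Type*} [Ring α] [LinearOrder α] [IsOrderedRing α]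
    {f : α → α} (hf : Monotone f) (h0 : f 0 = 0) (x : α) : 0 ≤ x * f x := by
  rcases le_total 0 x with hx | hx
  · exact mul_nonneg hx (h0 ▸ hf hx)
  · exact mul_nonneg_of_nonpos_of_nonpos hx (h0 ▸ hf hx)

namespace Real

theorem hasDerivAt_tanh (x : ℝ) : HasDerivAt tanh (1 - tanh x ^ 2) x := by
  have h := (hasDerivAt_sinh x).div (hasDerivAt_cosh x) (cosh_pos x).ne'
  rw [show sinh / cosh = tanh from funext fun y => (tanh_eq_sinh_div_cosh y).symm] at h
  refine h.congr_deriv ?_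
  rw [tanh_eq_sinh_div_cosh]
  field_simp

theorem tanh_nonneg {x : ℝ} (hx : 0 ≤ x) : 0 ≤ tanh x := by
  rw [tanh_eq_sinh_div_cosh]
  exact div_nonneg (sinh_nonneg_iff.2 hx) (cosh_pos x).le

theorem monotone_sub_tanh : Monotone fun y : ℝ => y - tanh y :=
  monotone_of_hasDerivAt_nonneg (fun y => (hasDerivAt_id y).sub (hasDerivAt_tanh y))
    fun y => by simp only [sub_sub_cancel]; positivity

theorem tanh_le_self {x : ℝ} (hx : 0 ≤ x) : tanh x ≤ x := by
  simpa using monotone_sub_tanh hx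

theorem abs_tanh_le_abs (x : ℝ) : |tanh x| ≤ |x| := by
  wlog hx : 0 ≤ x generalizing x
  · simpa [tanh_neg] using this (-x) (by linarith)
  exact abs_le_abs (tanh_le_self hx) (by linarith [tanh_nonneg hx])

theorem monotone_tanh_sub_taylor : Monotone fun y : ℝ => tanh y - (y - y ^ 3 / 3) := by
  have hderiv (y : ℝ) :
      HasDerivAt (fun y : ℝ => tanh y - (y - y ^ 3 / 3)) (y ^ 2 - tanh y ^ 2) y :=
    ((hasDerivAt_tanh y).sub ((hasDerivAt_id y).sub ((hasDerivAt_pow 3 y).div_const 3))).congr_deriv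
      (by simp)
  exact monotone_of_hasDerivAt_nonneg hderiv fun y => sub_nonneg.2 (sq_le_sq.2 (abs_tanh_le_abs y))

end Real

theorem mul_tanh_taylor_lower (x : ℝ) :
    x ^ 2 - x ^ 4 / 3 ≤ x * Real.tanh x := by
  have h := monotone_tanh_sub_taylor.mul_apply_nonneg (by simp) x
  linarith [show x * (tanh x - (x - x ^ 3 / 3)) = x * tanh x - (x ^ 2 - x ^ 4 / 3) by ring]
end

section
/- For every real a > 0 and every real x, tanh(a + x) + tanh(a - x) ≤ 2 * tanh(a). -/
theorem tanh_add_tanh_sub_le (a x : ℝ) (ha : 0 < a) :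
    Real.tanh (a + x) + Real.tanh (a - x) ≤ 2 * Real.tanh a := by
  have hs : 0 < Real.sinh a := Real.sinh_pos_iff.2 ha
  have hc : 0 < Real.cosh a := Real.cosh_pos a
  have hcx : 0 < Real.cosh x := Real.cosh_pos x
  have hD1 : 0 < Real.cosh (a + x) := Real.cosh_pos _
  have hD2 : 0 < Real.cosh (a - x) := Real.cosh_pos _
  have id1 : Real.cosh a ^ 2 - Real.sinh a ^ 2 = 1 := Real.cosh_sq_sub_sinh_sq a
  have id2 : Real.cosh x ^ 2 - Real.sinh x ^ 2 = 1 := Real.cosh_sq_sub_sinh_sq x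
  rw [Real.tanh_eq_sinh_div_cosh, Real.tanh_eq_sinh_div_cosh, Real.tanh_eq_sinh_div_cosh,
    div_add_div _ _ hD1.ne' hD2.ne', ← mul_div_assoc, div_le_div_iff₀ (by positivity) hc]
  rw [Real.sinh_add, Real.cosh_add, Real.sinh_sub, Real.cosh_sub]
  nlinarith [sq_nonneg (Real.sinh x), sq_nonneg (Real.sinh a * Real.sinh x),
    mul_pos hs hcx, mul_pos hc hcx, sq_nonneg (Real.sinh x * Real.cosh x)]
end

section
/- Suppose X and Z are real numbers, θ, θ* are vectors in R^d with inner products satisfying 2|⟨X, θ* - θ⟩| ≤ |⟨X, θ*⟩|, |⟨X, θ*⟩| ≥ 2τ, and |Z| ≤ τ for some τ > 0, and let Y = ⟨X, θ*⟩ + Z. Then |tanh(Y·⟨X,θ⟩) - tanh(Y·⟨X,θ*⟩)| ≤ exp(-τ²). -/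
/-!
Both `Y⟨X,θ⟩` and `Y⟨X,θ*⟩` are at least `τ²`: `Y` and `⟨X,θ⟩` lie on the same side of zero
as `⟨X,θ*⟩`, each at distance at least `τ` from zero, because the noise `Z` and the error
`⟨X,θ* - θ⟩` are at most half of `|⟨X,θ*⟩|`. Since `tanh` increases to `1` with
`1 - tanh s = exp (-s) / cosh s ≤ exp (-s)`, two values of `tanh` at points `≥ τ²` differ by at
most `exp (-τ²)`.
-/

namespace Real

theorem tanh_strictMono : StrictMono tanh := fun x y hxy ↦ by
  by_contra! h
  have := artanh_le_artanh (neg_one_lt_tanh y) (tanh_lt_one x) h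
  rw [artanh_tanh, artanh_tanh] at this
  exact this.not_gt hxy

theorem one_sub_tanh_le_exp_neg (s : ℝ) : 1 - tanh s ≤ exp (-s) := by
  have hcosh : 0 < cosh s := cosh_pos s
  calc 1 - tanh s = exp (-s) / cosh s := by
        rw [tanh_eq_sinh_div_cosh, ← cosh_sub_sinh, sub_div, div_self hcosh.ne']
    _ ≤ exp (-s) := div_le_self (exp_pos _).le (one_le_cosh s)

theorem abs_tanh_sub_tanh_le_exp_neg {s u v : ℝ} (hu : s ≤ u) (hv : s ≤ v) :
    |tanh u - tanh v| ≤ exp (-s) := by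
  have hsu := tanh_strictMono.monotone hu
  have hsv := tanh_strictMono.monotone hv
  have hu1 := tanh_lt_one u
  have hv1 := tanh_lt_one v
  have hs := one_sub_tanh_le_exp_neg s
  rw [abs_sub_le_iff]
  constructor <;> linarith

end Real

theorem sq_le_add_mul_of_two_mul_abs_sub_le_self {a b Z τ : ℝ} (hab : 2 * |a - b| ≤ a)
    (ha : 2 * τ ≤ a) (hZ : |Z| ≤ τ) : τ ^ 2 ≤ (a + Z) * b := by
  have hτ : 0 ≤ τ := (abs_nonneg Z).trans hZ
  have hY : τ ≤ a + Z := by linarith [neg_abs_le Z]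
  have hb : τ ≤ b := by linarith [le_abs_self (a - b)]
  rw [sq]
  exact mul_le_mul hY hb hτ (hτ.trans hY)

theorem sq_le_add_mul_of_two_mul_abs_sub_le {a b Z τ : ℝ} (hab : 2 * |a - b| ≤ |a|)
    (ha : 2 * τ ≤ |a|) (hZ : |Z| ≤ τ) : τ ^ 2 ≤ (a + Z) * b := by
  rcases le_total 0 a with h | h
  · rw [abs_of_nonneg h] at hab ha
    exact sq_le_add_mul_of_two_mul_abs_sub_le_self hab ha hZ
  · rw [abs_of_nonpos h] at hab ha
    have := sq_le_add_mul_of_two_mul_abs_sub_le_self (b := -b) (Z := -Z)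
      (by rwa [neg_sub_neg, abs_sub_comm]) ha (by rwa [abs_neg])
    linarith

theorem good_event_small_diff_general {d : ℕ} (X θ θs : EuclideanSpace ℝ (Fin d))
    (τ Z Y : ℝ)
    (h1 : 2 * |(inner ℝ X (θs - θ) : ℝ)| ≤ |(inner ℝ X θs : ℝ)|)
    (h2 : 2 * τ ≤ |(inner ℝ X θs : ℝ)|)
    (h3 : |Z| ≤ τ)
    (hY : Y = (inner ℝ X θs : ℝ) + Z) :
    |Real.tanh (Y * (inner ℝ X θ : ℝ)) - Real.tanh (Y * (inner ℝ X θs : ℝ))|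
      ≤ Real.exp (-τ ^ 2) := by
  rw [inner_sub_right] at h1
  subst hY
  apply Real.abs_tanh_sub_tanh_le_exp_neg
  · exact sq_le_add_mul_of_two_mul_abs_sub_le h1 h2 h3
  · exact sq_le_add_mul_of_two_mul_abs_sub_le (by simp) h2 h3

theorem good_event_small_diff {d : ℕ} (X θ θs : EuclideanSpace ℝ (Fin d))
    (τ Z Y : ℝ) (hτ : 0 < τ)
    (h1 : 2 * |(inner ℝ X (θs - θ) : ℝ)| ≤ |(inner ℝ X θs : ℝ)|)
    (h2 : 2 * τ ≤ |(inner ℝ X θs : ℝ)|)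
    (h3 : |Z| ≤ τ)
    (hY : Y = (inner ℝ X θs : ℝ) + Z) :
    |Real.tanh (Y * (inner ℝ X θ : ℝ)) - Real.tanh (Y * (inner ℝ X θs : ℝ))|
      ≤ Real.exp (-τ ^ 2) :=
  good_event_small_diff_general X θ θs τ Z Y h1 h2 h3 hY
end

section
/- Let x₁ ~ N(0,1) and z ~ N(0, σ²) be independent with σ ≥ 1, and let t ≥ 1/2. Then E[z x₁ tanh(t z x₁)] ≥ σ · E[z' x₁ tanh((1/2) z' x₁)] where z' ~ N(0,1) is independent of x₁, i.e., the function t ↦ E[z x₁ tanh(t z x₁)] is nondecreasing in t and scales at least linearly in σ. -/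
open MeasureTheory ProbabilityTheory

lemma my_continuous_tanh : Continuous Real.tanh := by
  have : Real.tanh = fun x => Real.sinh x / Real.cosh x := by
    funext x; exact Real.tanh_eq_sinh_div_cosh x
  rw [this]
  exact Real.continuous_sinh.div Real.continuous_cosh fun x => (Real.cosh_pos x).ne'

lemma my_tanh_le_tanh {a b : ℝ} (h : a ≤ b) : Real.tanh a ≤ Real.tanh b := by
  rw [Real.tanh_eq_sinh_div_cosh, Real.tanh_eq_sinh_div_cosh,
    div_le_div_iff₀ (Real.cosh_pos a) (Real.cosh_pos b)]
  have h2 : Real.sinh (a - b) ≤ 0 := by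
    rw [← Real.sinh_zero]
    exact (Real.sinh_le_sinh).2 (by linarith)
  rw [Real.sinh_sub] at h2
  linarith

lemma my_abs_tanh_le_one (x : ℝ) : |Real.tanh x| ≤ 1 := by
  rw [abs_le, Real.tanh_eq_sinh_div_cosh, div_le_one (Real.cosh_pos x),
    le_div_iff₀ (Real.cosh_pos x)]
  have h1 := Real.sinh_lt_cosh (x := x)
  have h2 := Real.sinh_lt_cosh (x := -x)
  rw [Real.sinh_neg, Real.cosh_neg] at h2
  constructor <;> linarith

lemma my_mul_tanh_mono {a b : ℝ} (ha : 0 ≤ a) (hab : a ≤ b) (w : ℝ) :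
    w * Real.tanh (a * w) ≤ w * Real.tanh (b * w) := by
  rcases le_total 0 w with hw | hw
  · exact mul_le_mul_of_nonneg_left
      (my_tanh_le_tanh (mul_le_mul_of_nonneg_right hab hw)) hw
  · exact mul_le_mul_of_nonpos_left
      (my_tanh_le_tanh (by nlinarith)) hw

lemma my_integrable_id_gauss : Integrable (fun x : ℝ => x) (gaussianReal 0 1) := by
  rw [gaussianReal_of_var_ne_zero 0 one_ne_zero,
    integrable_withDensity_iff (measurable_gaussianPDF 0 1)
      (Filter.Eventually.of_forall fun x => ENNReal.ofReal_lt_top)]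
  have : (fun x : ℝ => x * (gaussianPDF 0 1 x).toReal)
      = fun x : ℝ => (Real.sqrt (2 * Real.pi * 1))⁻¹ * (x * Real.exp (-(2⁻¹) * x ^ 2)) := by
    funext x
    rw [gaussianPDF, ENNReal.toReal_ofReal (gaussianPDFReal_nonneg 0 1 x), gaussianPDFReal]
    push_cast
    ring_nf
  rw [this]
  exact (integrable_mul_exp_neg_mul_sq (by norm_num : (0:ℝ) < 2⁻¹)).const_mul _

lemma my_integrable_aux (c : ℝ) :
    Integrable (fun p : ℝ × ℝ => p.2 * p.1 * Real.tanh (c * (p.2 * p.1)))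
      ((gaussianReal 0 1).prod (gaussianReal 0 1)) := by
  have habs : Integrable (fun x : ℝ => |x|) (gaussianReal 0 1) := my_integrable_id_gauss.abs
  have hbound : Integrable (fun p : ℝ × ℝ => |p.1| * |p.2|)
      ((gaussianReal 0 1).prod (gaussianReal 0 1)) := habs.mul_prod habs
  refine hbound.mono ?_ ?_
  · exact ((measurable_snd.mul measurable_fst).mul
      (my_continuous_tanh.measurable.comp
        ((measurable_snd.mul measurable_fst).const_mul c))).aestronglyMeasurable
  · refine Filter.Eventually.of_forall fun p => ?_
    simp only [Real.norm_eq_abs, abs_mul, abs_abs]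
    calc |p.2| * |p.1| * |Real.tanh (c * (p.2 * p.1))|
        ≤ |p.2| * |p.1| * 1 :=
          mul_le_mul_of_nonneg_left (my_abs_tanh_le_one _) (by positivity)
      _ = |p.1| * |p.2| := by ring

/-- With `x₁ ~ N(0,1)` and `z = σ z'` for `z' ~ N(0,1)` independent (so `z ~ N(0,σ²)`),
`σ ≥ 1` and `t ≥ 1/2`:
`E[z x₁ tanh(t z x₁)] ≥ σ E[z' x₁ tanh((1/2) z' x₁)]`. -/
theorem monotone_signal (σ t : ℝ) (hσ : 1 ≤ σ) (ht : 1 / 2 ≤ t) :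
    σ * (∫ p : ℝ × ℝ, p.2 * p.1 * Real.tanh ((1 / 2) * p.2 * p.1)
          ∂((gaussianReal 0 1).prod (gaussianReal 0 1)))
      ≤ ∫ p : ℝ × ℝ, (σ * p.2) * p.1 * Real.tanh (t * (σ * p.2) * p.1)
          ∂((gaussianReal 0 1).prod (gaussianReal 0 1)) := by
  have h1 : (fun p : ℝ × ℝ => (σ * p.2) * p.1 * Real.tanh (t * (σ * p.2) * p.1))
      = fun p : ℝ × ℝ => σ * (p.2 * p.1 * Real.tanh ((t * σ) * (p.2 * p.1))) := by
    funext p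
    rw [show t * (σ * p.2) * p.1 = (t * σ) * (p.2 * p.1) by ring]
    ring
  have h2 : (fun p : ℝ × ℝ => p.2 * p.1 * Real.tanh ((1 / 2) * p.2 * p.1))
      = fun p : ℝ × ℝ => p.2 * p.1 * Real.tanh ((1 / 2 : ℝ) * (p.2 * p.1)) := by
    funext p; rw [show (1 / 2 : ℝ) * p.2 * p.1 = (1 / 2 : ℝ) * (p.2 * p.1) by ring]
  rw [h1, h2, integral_const_mul]
  refine mul_le_mul_of_nonneg_left ?_ (by linarith)
  refine integral_mono (my_integrable_aux (1/2)) (my_integrable_aux (t * σ)) fun p => ?_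
  exact my_mul_tanh_mono (by norm_num) (by nlinarith) (p.2 * p.1)
end

section
/- Let x₁, z ~ N(0,1) be independent, and define f(t) = E[(x₁ z) tanh(t x₁ z)] for t ≥ 0. Then for 0 ≤ t ≤ 1/2: f(t) ≥ t E[(x₁ z)²] − (t³/3) E[(x₁ z)⁴] = t(1 − 3t²). -/
/-!
Pointwise, `u tanh u ≥ u² - u⁴/3` (for `u ≥ 0` this is `(u - u³/3) cosh u ≤ sinh u`, which follows
from a nonnegative derivative). Applying it to `u = t x z`, dividing by `t`, and integrating against
the product Gaussian gives `f(t) ≥ t E[x²] E[z²] - (t³/3) E[x⁴] E[z⁴] = t - 3t³`. The Gaussian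
moments `E[x²] = v`, `E[x⁴] = 3v²` are read off the derivatives at `0` of the moment generating
function `exp (v t² / 2)`.
-/

open MeasureTheory ProbabilityTheory Real NNReal Set

@[fun_prop]
lemma Real.continuous_tanh : Continuous tanh := by
  simp_rw [funext tanh_eq_sinh_div_cosh]
  exact continuous_sinh.div continuous_cosh fun x ↦ (cosh_pos x).ne'

lemma monotoneOn_Ici_of_hasDerivAt_nonneg {a : ℝ} {f f' : ℝ → ℝ}
    (hf : ∀ x, HasDerivAt f (f' x) x) (hf' : ∀ x, a < x → 0 ≤ f' x) : MonotoneOn f (Ici a) :=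
  monotoneOn_of_hasDerivWithinAt_nonneg (convex_Ici a)
    (fun x _ ↦ (hf x).continuousAt.continuousWithinAt)
    (fun x _ ↦ (hf x).hasDerivWithinAt) (by simpa using hf')

lemma sinh_le_mul_cosh {u : ℝ} (hu : 0 ≤ u) : sinh u ≤ u * cosh u := by
  have hd (x : ℝ) : HasDerivAt (fun u ↦ u * cosh u - sinh u) (x * sinh x) x :=
    (((hasDerivAt_id x).mul (hasDerivAt_cosh x)).sub (hasDerivAt_sinh x)).congr_deriv (by simp)
  have := monotoneOn_Ici_of_hasDerivAt_nonneg hd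
    (fun x hx ↦ mul_nonneg hx.le (sinh_nonneg_iff.2 hx.le)) self_mem_Ici hu hu
  simpa using this

lemma sub_pow_three_div_three_mul_cosh_le_sinh {u : ℝ} (hu : 0 ≤ u) :
    (u - u ^ 3 / 3) * cosh u ≤ sinh u := by
  have hd (x : ℝ) : HasDerivAt (fun u ↦ sinh u - (u - u ^ 3 / 3) * cosh u)
      (x * (x * cosh x - sinh x) + x ^ 3 / 3 * sinh x) x := by
    have hp : HasDerivAt (fun u ↦ u - u ^ 3 / 3) (1 - x ^ 2) x :=
      ((hasDerivAt_id x).sub ((hasDerivAt_pow 3 x).div_const 3)).congr_deriv (by simp)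
    exact ((hasDerivAt_sinh x).sub (hp.mul (hasDerivAt_cosh x))).congr_deriv (by ring)
  have hd_nonneg (x : ℝ) (hx : 0 < x) : 0 ≤ x * (x * cosh x - sinh x) + x ^ 3 / 3 * sinh x := by
    have := sub_nonneg.2 (sinh_le_mul_cosh hx.le)
    have := sinh_nonneg_iff.2 hx.le
    positivity
  have := monotoneOn_Ici_of_hasDerivAt_nonneg hd hd_nonneg self_mem_Ici hu hu
  simpa using this

lemma sq_sub_pow_four_div_three_le_mul_tanh (u : ℝ) : u ^ 2 - u ^ 4 / 3 ≤ u * tanh u := by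
  wlog hu : 0 ≤ u generalizing u
  · simpa [tanh_neg, Even.neg_pow ⟨2, rfl⟩] using this (-u) (by linarith)
  have h := mul_le_mul_of_nonneg_left (sub_pow_three_div_three_mul_cosh_le_sinh hu) hu
  rw [tanh_eq_sinh_div_cosh, mul_div_assoc', le_div_iff₀ (cosh_pos u)]
  linarith

lemma mul_sq_sub_le_mul_tanh_mul {t : ℝ} (ht : 0 ≤ t) (w : ℝ) :
    t * w ^ 2 - t ^ 3 / 3 * w ^ 4 ≤ w * tanh (t * w) := by
  rcases ht.eq_or_lt with rfl | ht
  · simp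
  refine le_of_mul_le_mul_left ?_ ht
  calc t * (t * w ^ 2 - t ^ 3 / 3 * w ^ 4) = (t * w) ^ 2 - (t * w) ^ 4 / 3 := by ring
    _ ≤ t * w * tanh (t * w) := sq_sub_pow_four_div_three_le_mul_tanh _
    _ = t * (w * tanh (t * w)) := by ring

section GaussianMoments

lemma deriv_mul_exp_mul_sq_div_two {c t : ℝ} {g : ℝ → ℝ} (hg : DifferentiableAt ℝ g t) :
    deriv (fun s ↦ g s * exp (c * s ^ 2 / 2)) t
      = (deriv g t + c * t * g t) * exp (c * t ^ 2 / 2) := by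
  have h : HasDerivAt (fun s ↦ c * s ^ 2 / 2) (c * t) t :=
    (((hasDerivAt_pow 2 t).const_mul c).div_const 2).congr_deriv (by push_cast; ring)
  exact ((hg.hasDerivAt.mul h.exp).congr_deriv (by ring)).deriv

lemma iteratedDeriv_two_exp_mul_sq_div_two (c : ℝ) :
    iteratedDeriv 2 (fun t ↦ exp (c * t ^ 2 / 2))
      = fun t ↦ (c + c ^ 2 * t ^ 2) * exp (c * t ^ 2 / 2) := by
  have h1 : iteratedDeriv 1 (fun t ↦ exp (c * t ^ 2 / 2)) = fun t ↦ c * t * exp (c * t ^ 2 / 2) := by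
    ext t
    simpa using deriv_mul_exp_mul_sq_div_two (c := c) (t := t) (g := fun _ ↦ 1) (by fun_prop)
  ext t
  rw [iteratedDeriv_succ, h1, deriv_mul_exp_mul_sq_div_two (g := fun t ↦ c * t) (by fun_prop),
    deriv_const_mul_field', deriv_id'']
  ring

lemma iteratedDeriv_four_exp_mul_sq_div_two (c : ℝ) :
    iteratedDeriv 4 (fun t ↦ exp (c * t ^ 2 / 2))
      = fun t ↦ (3 * c ^ 2 + 6 * c ^ 3 * t ^ 2 + c ^ 4 * t ^ 4) * exp (c * t ^ 2 / 2) := by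
  have h3 : iteratedDeriv 3 (fun t ↦ exp (c * t ^ 2 / 2))
      = fun t ↦ (3 * c ^ 2 * t + c ^ 3 * t ^ 3) * exp (c * t ^ 2 / 2) := by
    ext t
    rw [iteratedDeriv_succ, iteratedDeriv_two_exp_mul_sq_div_two,
      deriv_mul_exp_mul_sq_div_two (g := fun t ↦ c + c ^ 2 * t ^ 2) (by fun_prop)]
    simp only [deriv_const_add', deriv_const_mul_field', deriv_pow_field]
    push_cast
    ring
  ext t
  rw [iteratedDeriv_succ, h3,
    deriv_mul_exp_mul_sq_div_two (g := fun t ↦ 3 * c ^ 2 * t + c ^ 3 * t ^ 3) (by fun_prop),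
    deriv_fun_add (by fun_prop) (by fun_prop)]
  simp only [deriv_const_mul_id', deriv_const_mul_field', deriv_pow_field]
  push_cast
  ring

variable {v : ℝ≥0}

lemma integrable_pow_gaussianReal {μ : ℝ} (n : ℕ) :
    Integrable (fun x ↦ x ^ n) (gaussianReal μ v) :=
  integrable_pow_of_mem_interior_integrableExpSet (X := fun x ↦ x) (by simp) n

lemma integral_pow_gaussianReal_zero (n : ℕ) :
    ∫ x, x ^ n ∂gaussianReal 0 v = iteratedDeriv n (fun t ↦ exp (v * t ^ 2 / 2)) 0 := by
  have := iteratedDeriv_mgf_zero (X := fun x ↦ x) (μ := gaussianReal 0 v) (by simp) n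
  simpa [mgf_fun_id_gaussianReal] using this.symm

lemma integral_sq_gaussianReal_zero : ∫ x, x ^ 2 ∂gaussianReal 0 v = v := by
  simp [integral_pow_gaussianReal_zero, iteratedDeriv_two_exp_mul_sq_div_two]

lemma integral_pow_four_gaussianReal_zero : ∫ x, x ^ 4 ∂gaussianReal 0 v = 3 * v ^ 2 := by
  simp [integral_pow_gaussianReal_zero, iteratedDeriv_four_exp_mul_sq_div_two]

end GaussianMoments

lemma integral_mul_pow_prod (μ ν : Measure ℝ) [SFinite μ] [SFinite ν] (n : ℕ) :
    ∫ p, (p.1 * p.2) ^ n ∂μ.prod ν = (∫ x, x ^ n ∂μ) * ∫ y, y ^ n ∂ν := by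
  simp_rw [mul_pow]
  exact integral_prod_mul (fun x ↦ x ^ n) (fun y ↦ y ^ n)

theorem product_tanh_lower_general (t : ℝ) (h0 : 0 ≤ t) :
    t * (1 - 3 * t ^ 2)
      ≤ ∫ p : ℝ × ℝ, p.1 * p.2 * Real.tanh (t * p.1 * p.2)
          ∂((gaussianReal 0 1).prod (gaussianReal 0 1)) := by
  set γ := gaussianReal 0 1
  have hpow (n : ℕ) : Integrable (fun p : ℝ × ℝ ↦ (p.1 * p.2) ^ n) (γ.prod γ) := by
    simpa [mul_pow] using (integrable_pow_gaussianReal n).mul_prod (integrable_pow_gaussianReal n)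
  have hlower_int : Integrable
      (fun p : ℝ × ℝ ↦ t * (p.1 * p.2) ^ 2 - t ^ 3 / 3 * (p.1 * p.2) ^ 4) (γ.prod γ) :=
    ((hpow 2).const_mul t).sub ((hpow 4).const_mul _)
  have htanh_int : Integrable (fun p : ℝ × ℝ ↦ p.1 * p.2 * tanh (t * p.1 * p.2)) (γ.prod γ) :=
    (by simpa using hpow 1 : Integrable (fun p : ℝ × ℝ ↦ p.1 * p.2) _).mul_bdd
      (by fun_prop) (ae_of_all _ fun p ↦ (abs_tanh_lt_one _).le)
  calc t * (1 - 3 * t ^ 2)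
      = ∫ p, t * (p.1 * p.2) ^ 2 - t ^ 3 / 3 * (p.1 * p.2) ^ 4 ∂(γ.prod γ) := by
        rw [integral_sub ((hpow 2).const_mul t) ((hpow 4).const_mul _), integral_const_mul,
          integral_const_mul, integral_mul_pow_prod, integral_mul_pow_prod,
          integral_sq_gaussianReal_zero, integral_pow_four_gaussianReal_zero]
        push_cast
        ring
    _ ≤ _ := integral_mono hlower_int htanh_int fun p ↦ by
        simpa only [mul_assoc] using mul_sq_sub_le_mul_tanh_mul h0 (p.1 * p.2)

theorem product_tanh_lower (t : ℝ) (h0 : 0 ≤ t) (h1 : t ≤ 1 / 2) :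
    t * (1 - 3 * t ^ 2)
      ≤ ∫ p : ℝ × ℝ, p.1 * p.2 * Real.tanh (t * p.1 * p.2)
          ∂((gaussianReal 0 1).prod (gaussianReal 0 1)) :=
  product_tanh_lower_general t h0
end
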